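/- Fix κ ∈ (−1,1). The measure μ_∞ on [0, 2π) with μ_∞ = |κ|·δ_0 + (1/2π)·√(1 − κ²/sin²ψ)·1_{|sin ψ| > |κ|} dψ is a probability measure, i.e. |κ| + (1/2π)∫_0^{2π} √(1 − κ²/sin²ψ)·1_{|sin ψ| > |κ|} dψ = 1. -/

import Mathlib

set_option maxHeartbeats 1000000
open Real MeasureTheory intervalIntegral Set

lemma key6 (a : ℝ) (ha0 : 0 ≤ a) (ha1 : a < 1) :
    ∫ ψ in Real.arcsin a..(Real.pi/2), Real.sqrt (1 - a^2 / Real.sin ψ ^ 2)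
      = (Real.pi/2) * (1 - a) := by
  rcases eq_or_lt_of_le ha0 with h0 | h0
  · simp only [← h0, ne_eq, OfNat.ofNat_ne_zero, not_false_eq_true, zero_pow, zero_div,
      sub_zero, Real.sqrt_one, Real.arcsin_zero]
    simp
  · set b := Real.sqrt (1 - a^2) with hb
    have hb0 : 0 < b := Real.sqrt_pos.mpr (by nlinarith)
    have hbsq : b ^ 2 = 1 - a ^ 2 := Real.sq_sqrt (by nlinarith)
    set s := Real.arcsin a with hs
    have hsin_s : Real.sin s = a := Real.sin_arcsin (by linarith) (le_of_lt ha1)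
    have hcos_s : Real.cos s = b := Real.cos_arcsin a
    have hs_mem : s ∈ Icc (-(π/2)) (π/2) := Real.arcsin_mem_Icc a
    have hs_lt : s < π/2 := lt_of_le_of_ne hs_mem.2 (by
      intro h
      have := hsin_s
      rw [h, Real.sin_pi_div_two] at this
      linarith)
    set H : ℝ → ℝ := fun ψ => -Real.arcsin (Real.cos ψ / b)
      + a * Real.arcsin (a * Real.cos ψ / (b * Real.sin ψ)) with hH
    have hsin_ge : ∀ ψ ∈ Icc s (π/2), a ≤ Real.sin ψ := by
      intro ψ hψ
      have : Real.sin s ≤ Real.sin ψ :=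
        Real.strictMonoOn_sin.monotoneOn hs_mem
          ⟨le_trans hs_mem.1 hψ.1, hψ.2⟩ hψ.1
      rwa [hsin_s] at this
    have hderiv : ∀ ψ ∈ Ioo s (π/2),
        HasDerivAt H (Real.sqrt (1 - a^2 / Real.sin ψ ^ 2)) ψ := by
      intro ψ hψ
      have hψ1 : -(π/2) < ψ := lt_of_le_of_lt hs_mem.1 hψ.1
      have hψ2 : ψ < π/2 := hψ.2
      have hsin : a < Real.sin ψ := by
        have := Real.strictMonoOn_sin ⟨hs_mem.1, hs_mem.2⟩
          ⟨le_of_lt hψ1, le_of_lt hψ2⟩ hψ.1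
        rwa [hsin_s] at this
      have hsin0 : 0 < Real.sin ψ := lt_of_le_of_lt ha0 hsin
      have hcosnn : 0 ≤ Real.cos ψ :=
        Real.cos_nonneg_of_mem_Icc ⟨le_of_lt hψ1, le_of_lt hψ2⟩
      have hpyth : Real.sin ψ ^ 2 + Real.cos ψ ^ 2 = 1 := Real.sin_sq_add_cos_sq ψ
      have hcoslt : Real.cos ψ < b := by nlinarith
      set r := Real.sqrt (Real.sin ψ ^ 2 - a ^ 2) with hr
      have hr0 : 0 < r := Real.sqrt_pos.mpr (by nlinarith)
      have hrsq : r ^ 2 = Real.sin ψ ^ 2 - a ^ 2 := Real.sq_sqrt (by nlinarith)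
      -- first term
      have h1ne1 : Real.cos ψ / b ≠ 1 := ne_of_lt ((div_lt_one hb0).mpr hcoslt)
      have h1nem1 : Real.cos ψ / b ≠ -1 := by
        have : 0 ≤ Real.cos ψ / b := div_nonneg hcosnn hb0.le
        linarith
      have d1 : HasDerivAt (fun ψ => Real.arcsin (Real.cos ψ / b))
          (1 / Real.sqrt (1 - (Real.cos ψ / b) ^ 2) * (-Real.sin ψ / b)) ψ :=
        (Real.hasDerivAt_arcsin h1nem1 h1ne1).comp (h := fun ψ => Real.cos ψ / b) ψ
          ((Real.hasDerivAt_cos ψ).div_const b)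
      have e1 : Real.sqrt (1 - (Real.cos ψ / b) ^ 2) = r / b := by
        have : 1 - (Real.cos ψ / b) ^ 2 = (r / b) ^ 2 := by
          field_simp
          nlinarith
        rw [this, Real.sqrt_sq (by positivity)]
      -- second term
      have hbs0 : b * Real.sin ψ ≠ 0 := by positivity
      have h2lt : a * Real.cos ψ / (b * Real.sin ψ) < 1 := by
        rw [div_lt_one (by positivity)]
        nlinarith
      have h2nn : 0 ≤ a * Real.cos ψ / (b * Real.sin ψ) := by positivity
      have d2inner : HasDerivAt (fun ψ => a * Real.cos ψ / (b * Real.sin ψ))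
          ((a * -Real.sin ψ * (b * Real.sin ψ) - a * Real.cos ψ * (b * Real.cos ψ))
            / (b * Real.sin ψ) ^ 2) ψ :=
        (((Real.hasDerivAt_cos ψ).const_mul a).div
          ((Real.hasDerivAt_sin ψ).const_mul b) hbs0)
      have d2 : HasDerivAt (fun ψ => Real.arcsin (a * Real.cos ψ / (b * Real.sin ψ)))
          (1 / Real.sqrt (1 - (a * Real.cos ψ / (b * Real.sin ψ)) ^ 2) *
            ((a * -Real.sin ψ * (b * Real.sin ψ) - a * Real.cos ψ * (b * Real.cos ψ))
            / (b * Real.sin ψ) ^ 2)) ψ :=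
        (Real.hasDerivAt_arcsin (by linarith) (ne_of_lt h2lt)).comp
          (h := fun ψ => a * Real.cos ψ / (b * Real.sin ψ)) ψ d2inner
      have e2 : Real.sqrt (1 - (a * Real.cos ψ / (b * Real.sin ψ)) ^ 2)
          = r / (b * Real.sin ψ) := by
        have : 1 - (a * Real.cos ψ / (b * Real.sin ψ)) ^ 2
            = (r / (b * Real.sin ψ)) ^ 2 := by
          field_simp
          nlinarith
        rw [this, Real.sqrt_sq (by positivity)]
      have etgt : Real.sqrt (1 - a ^ 2 / Real.sin ψ ^ 2) = r / Real.sin ψ := by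
        have : 1 - a ^ 2 / Real.sin ψ ^ 2 = (r / Real.sin ψ) ^ 2 := by
          field_simp
          nlinarith
        rw [this, Real.sqrt_sq (by positivity)]
      have := (d1.neg).add (d2.const_mul a)
      refine this.congr_deriv (Eq.symm ?_)
      rw [e1, e2, etgt]
      field_simp
      ring_nf
      linear_combination hrsq + a ^ 2 * hpyth
    have hcont : ContinuousOn H (Icc s (π/2)) := by
      apply ContinuousOn.add
      · exact (Real.continuous_arcsin.comp (continuous_cos.div_const b)).continuousOn.neg
      · apply ContinuousOn.mul continuousOn_const
        apply Real.continuous_arcsin.comp_continuousOn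
        apply ContinuousOn.div ((continuous_const.mul Real.continuous_cos).continuousOn)
          ((continuous_const.mul Real.continuous_sin).continuousOn)
        intro ψ hψ
        exact ne_of_gt (mul_pos hb0 (lt_of_lt_of_le h0 (hsin_ge ψ hψ)))
    have hint : IntervalIntegrable (fun ψ => Real.sqrt (1 - a^2 / Real.sin ψ ^ 2))
        volume s (π/2) := by
      apply ContinuousOn.intervalIntegrable
      rw [uIcc_of_le hs_lt.le]
      apply ContinuousOn.sqrt
      apply ContinuousOn.sub continuousOn_const
      apply ContinuousOn.div continuousOn_const ((Real.continuous_sin.pow 2).continuousOn)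
      intro ψ hψ
      have := lt_of_lt_of_le h0 (hsin_ge ψ hψ)
      exact pow_ne_zero 2 this.ne'
    rw [integral_eq_sub_of_hasDerivAt_of_le hs_lt.le hcont hderiv hint]
    have hab : a * b / (b * a) = 1 := by
      rw [mul_comm a b, div_self (by positivity)]
    simp only [hH, Real.cos_pi_div_two, Real.sin_pi_div_two, zero_div, mul_zero,
      Real.arcsin_zero, mul_one, neg_zero, add_zero, hcos_s, hsin_s,
      div_self hb0.ne', hab, Real.arcsin_one, zero_add]
    ring

theorem stmt6 (κ : ℝ) (hκ : κ ∈ Set.Ioo (-1 : ℝ) 1) :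
    |κ| + (1 / (2 * Real.pi)) *
      ∫ ψ in (0 : ℝ)..(2 * Real.pi),
        (if |Real.sin ψ| > |κ| then Real.sqrt (1 - κ ^ 2 / Real.sin ψ ^ 2) else 0) = 1 := by
  rw [show κ ^ 2 = |κ| ^ 2 from (sq_abs κ).symm]
  set a := |κ| with ha
  have ha0 : (0:ℝ) ≤ a := abs_nonneg κ
  have ha1 : a < 1 := abs_lt.mpr ⟨hκ.1, hκ.2⟩
  set g : ℝ → ℝ := fun ψ =>
    if |Real.sin ψ| > a then Real.sqrt (1 - a ^ 2 / Real.sin ψ ^ 2) else 0 with hg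
  have hgnn : ∀ ψ, 0 ≤ g ψ := by
    intro ψ; rw [hg]; dsimp only; split
    · exact Real.sqrt_nonneg _
    · exact le_refl 0
  have hgle : ∀ ψ, g ψ ≤ 1 := by
    intro ψ; rw [hg]; dsimp only; split
    · calc Real.sqrt (1 - a ^ 2 / Real.sin ψ ^ 2) ≤ Real.sqrt 1 :=
            Real.sqrt_le_sqrt (sub_le_self 1 (by positivity))
        _ = 1 := Real.sqrt_one
    · exact zero_le_one
  have hgint : ∀ u v : ℝ, IntervalIntegrable g volume u v := by
    intro u v
    rw [intervalIntegrable_iff]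
    haveI : IsFiniteMeasure (volume.restrict (uIoc u v)) :=
      ⟨by rw [Measure.restrict_apply_univ]; exact measure_Ioc_lt_top⟩
    apply MeasureTheory.Integrable.mono' (integrable_const (1:ℝ))
    · refine ((Measurable.ite ?_ ?_ measurable_const).aestronglyMeasurable).restrict
      · exact measurableSet_lt measurable_const Real.continuous_sin.measurable.abs
      · exact (measurable_const.sub
          (measurable_const.div ((Real.continuous_sin.measurable).pow_const 2))).sqrt
    · filter_upwards with ψ
      rw [Real.norm_eq_abs, abs_of_nonneg (hgnn ψ)]
      exact hgle ψ
  have hper : ∀ ψ, g (ψ + π) = g ψ := by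
    intro ψ; rw [hg]; simp [Real.sin_add_pi, abs_neg, neg_sq]
  have hrefl : ∀ ψ, g (π - ψ) = g ψ := by
    intro ψ; rw [hg]; simp [Real.sin_pi_sub]
  -- quarter integral
  have hs_mem := Real.arcsin_mem_Icc a
  set s := Real.arcsin a with hs
  have hs0 : 0 ≤ s := Real.arcsin_nonneg.mpr ha0
  have hs_le : s ≤ π/2 := hs_mem.2
  have hsin_s : Real.sin s = a := Real.sin_arcsin (by linarith) (le_of_lt ha1)
  have hquarter : ∫ ψ in (0:ℝ)..(π/2), g ψ = (π/2) * (1 - a) := by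
    rw [← intervalIntegral.integral_add_adjacent_intervals (hgint 0 s) (hgint s (π/2))]
    have hA : ∫ ψ in (0:ℝ)..s, g ψ = 0 := by
      have heq : EqOn g (fun _ => (0:ℝ)) (uIcc 0 s) := by
        intro ψ hψ
        rw [uIcc_of_le hs0] at hψ
        have h1 : Real.sin ψ ≤ a := by
          have := Real.strictMonoOn_sin.monotoneOn
            ⟨by linarith [hψ.1, Real.pi_pos], le_trans hψ.2 hs_le⟩
            ⟨hs_mem.1, hs_le⟩ hψ.2
          rwa [hsin_s] at this
        have h2 : 0 ≤ Real.sin ψ :=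
          Real.sin_nonneg_of_nonneg_of_le_pi hψ.1
            (by linarith [le_trans hψ.2 hs_le, Real.pi_pos])
        rw [hg]; dsimp only
        rw [if_neg]
        rw [abs_of_nonneg h2]
        exact not_lt.mpr h1
      rw [intervalIntegral.integral_congr heq]
      simp
    have hB : ∫ ψ in s..(π/2), g ψ
        = ∫ ψ in s..(π/2), Real.sqrt (1 - a ^ 2 / Real.sin ψ ^ 2) := by
      apply intervalIntegral.integral_congr_ae
      filter_upwards with ψ hψ
      rw [uIoc_of_le hs_le] at hψ
      have hsin : a < Real.sin ψ := by
        have := Real.strictMonoOn_sin ⟨hs_mem.1, hs_le⟩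
          ⟨by linarith [hψ.1], hψ.2⟩ hψ.1
        rwa [hsin_s] at this
      rw [hg]; dsimp only
      rw [if_pos]
      rw [abs_of_nonneg (by linarith)]
      exact hsin
    rw [hA, hB, zero_add]
    exact key6 a ha0 ha1
  have hhalf : ∫ ψ in (0:ℝ)..π, g ψ = 2 * ((π/2) * (1 - a)) := by
    rw [← intervalIntegral.integral_add_adjacent_intervals (hgint 0 (π/2)) (hgint (π/2) π)]
    have : ∫ ψ in (π/2)..π, g ψ = ∫ ψ in (0:ℝ)..(π/2), g ψ := by
      have h := intervalIntegral.integral_comp_sub_left (a := 0) (b := π/2) g π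
      rw [sub_zero, show π - π/2 = π/2 by ring] at h
      rw [← h]
      exact intervalIntegral.integral_congr fun ψ _ => hrefl ψ
    rw [this, hquarter]; ring
  have hfull : ∫ ψ in (0:ℝ)..(2*π), g ψ = 2 * π * (1 - a) := by
    rw [show (2*π : ℝ) = π + π by ring] at *
    rw [← intervalIntegral.integral_add_adjacent_intervals (hgint 0 π) (hgint π (π + π))]
    have : ∫ ψ in π..(π + π), g ψ = ∫ ψ in (0:ℝ)..π, g ψ := by
      have h := intervalIntegral.integral_comp_add_right (a := 0) (b := π) g π
      rw [zero_add] at h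
      rw [← h]
      exact intervalIntegral.integral_congr fun ψ _ => hper ψ
    rw [this, hhalf]; ring
  rw [hfull]
  have hπ : (π : ℝ) ≠ 0 := Real.pi_ne_zero
  field_simp
  ring
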